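/- arXiv:2309.02820 — 2 statements merged into one kernel-verified Lean document; each statement's English description precedes it below -/
import Mathlib

section
/- Let a 3-CNF formula over n Boolean variables be given by m clauses, where clause j consists of three literals encoded by variable indices i_{j,1}, i_{j,2}, i_{j,3} ∈ {0,...,n-1} and signs s_{j,1}, s_{j,2}, s_{j,3} ∈ {-1,1}. If there exists a truth assignment t : {0,...,n-1} → Bool satisfying every clause (i.e., for each j there is some k with the literal true: s_{j,k} = 1 and t(i_{j,k}) = true, or s_{j,k} = -1 and t(i_{j,k}) = false), then defining x_i = -1 if t(i) = true and x_i = 1 otherwise, every gadget value max(s_{j,1}·x_{i_{j,1}} + s_{j,2}·x_{i_{j,2}} + s_{j,3}·x_{i_{j,3}} - 2, 0) equals 0. (Completeness claim of the Theorem 2 reduction: a satisfying assignment makes all clause neurons output 0, so the constructed network attains the target representation x_r on the clause coordinates.) -/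
/-!
Encoding truth values by `±1` and literal signs by `±1`, every literal contributes at most `1`
to the clause sum, and a true literal contributes `-1`. A satisfied clause therefore has
sum at most `-1 + 1 + 1 = 1 ≤ 2`, so its ReLU gadget outputs `0`.
-/

open Finset

theorem Fintype.sum_le_card_sub_one_of_le_one {ι R : Type*} [Fintype ι] [DecidableEq ι]
    [Ring R] [LinearOrder R] [IsOrderedRing R] {a : ι → R}
    (ha : ∀ i, a i ≤ 1) {k : ι} (hk : a k ≤ 0) :
    ∑ i, a i ≤ Fintype.card ι - 1 := by
  have hrest : ∑ i ∈ univ.erase k, a i ≤ ((univ.erase k).card : R) := by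
    simpa using Finset.sum_le_card_nsmul (univ.erase k) a 1 fun i _ => ha i
  rw [← Finset.add_sum_erase univ a (mem_univ k)]
  rw [card_erase_of_mem (mem_univ k), card_univ,
    Nat.cast_sub (Fintype.card_pos_iff.mpr ⟨k⟩), Nat.cast_one] at hrest
  exact (add_le_add hk hrest).trans_eq (zero_add _)

lemma sign_mul_boolEncoding_le_one {R : Type*} [Ring R] [LinearOrder R] [IsOrderedRing R] {s : R}
    (hs : s = -1 ∨ s = 1) (b : Bool) :
    s * (if b then -1 else 1) ≤ 1 := by
  rcases hs with rfl | rfl <;> cases b <;> norm_num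

lemma sign_mul_boolEncoding_of_literal_true {R : Type*} [Ring R] {s : R} {b : Bool}
    (h : (s = 1 ∧ b = true) ∨ (s = -1 ∧ b = false)) :
    s * (if b then -1 else 1) = -1 := by
  rcases h with ⟨rfl, rfl⟩ | ⟨rfl, rfl⟩ <;> simp

/-- Completeness claim of the Theorem 2 reduction: a satisfying assignment
makes every clause neuron output 0. -/
theorem reduction_completeness (n m : ℕ)
    (idx : Fin m → Fin 3 → Fin n) (s : Fin m → Fin 3 → ℝ)
    (hs : ∀ j k, s j k = -1 ∨ s j k = 1)
    (t : Fin n → Bool)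
    (hsat : ∀ j : Fin m, ∃ k : Fin 3,
      (s j k = 1 ∧ t (idx j k) = true) ∨ (s j k = -1 ∧ t (idx j k) = false))
    (x : Fin n → ℝ) (hx : ∀ i, x i = if t i then (-1 : ℝ) else 1) :
    ∀ j : Fin m, max (∑ k : Fin 3, s j k * x (idx j k) - 2) 0 = 0 := by
  intro j
  simp only [hx]
  have hle : ∀ k, s j k * (if t (idx j k) then -1 else 1) ≤ 1 := fun k =>
    sign_mul_boolEncoding_le_one (hs j k) _
  obtain ⟨k, hk⟩ := hsat j
  have hsum := Fintype.sum_le_card_sub_one_of_le_one hle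
    ((sign_mul_boolEncoding_of_literal_true hk).trans_le (by norm_num))
  rw [Fintype.card_fin, Nat.cast_ofNat] at hsum
  exact max_eq_right (by linarith)
end

section
/- Let a 3-CNF formula over n Boolean variables be given by m ≥ 1 clauses, where clause j consists of three literals encoded by variable indices and signs s_{j,k} ∈ {-1,1}, and suppose n ≤ 3·m and that Q ≥ 15000 is a real number. Let x ∈ {-1,1}^n and let g_j(x) = max(s_{j,1}·x_{i_{j,1}} + s_{j,2}·x_{i_{j,2}} + s_{j,3}·x_{i_{j,3}} - 2, 0) be the clause gadget values. If Σ_{j=1}^m g_j(x)² ≤ (1/(3600·Q²))·(m + 100·Q²·n), then the truth assignment defined by t(i) = true iff x_i = -1 satisfies at least (7/8 + 5/√Q)·m of the clauses. (Soundness claim of the Theorem 2 reduction in the binary case: an approximate preimage of the target representation yields an assignment satisfying more than a (7/8 + 5/√Q) fraction of clauses.) -/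
/-!
A clause all of whose literals are false has gadget value `max (3 - 2) 0 = 1`, so the number of
unsatisfied clauses is at most `∑ g_j² ≤ m / (3600 Q²) + n / 36 ≤ m / (3600 Q²) + m / 12`.
Since `√Q ≥ 122`, this is at most `(1/8 - 5/√Q) m`.
-/

open Finset

lemma mul_eq_one_of_not_literal_true {s y : ℝ} (hs : s = -1 ∨ s = 1) (hy : y = -1 ∨ y = 1)
    (hfalse : ¬((s = 1 ∧ y = -1) ∨ (s = -1 ∧ y = 1))) : s * y = 1 := by
  rcases hs with rfl | rfl <;> rcases hy with rfl | rfl <;> norm_num at *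

lemma clause_gadget_eq_one_of_unsat {s y : Fin 3 → ℝ} (hs : ∀ k, s k = -1 ∨ s k = 1)
    (hy : ∀ k, y k = -1 ∨ y k = 1)
    (hunsat : ¬∃ k, (s k = 1 ∧ y k = -1) ∨ (s k = -1 ∧ y k = 1)) :
    max (∑ k, s k * y k - 2) 0 = 1 := by
  have hlit (k : Fin 3) : s k * y k = 1 :=
    mul_eq_one_of_not_literal_true (hs k) (hy k) (not_exists.mp hunsat k)
  simp only [Fin.sum_univ_three, hlit]
  norm_num

lemma card_sub_card_le_sum_sq {ι : Type*} [Fintype ι] [DecidableEq ι] (S : Finset ι) (g : ι → ℝ)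
    (hg : ∀ j ∉ S, g j = 1) : (Fintype.card ι : ℝ) - S.card ≤ ∑ j, g j ^ 2 := calc
  (Fintype.card ι : ℝ) - S.card = ∑ j ∈ Sᶜ, g j ^ 2 := by
    rw [← Nat.cast_sub (card_le_univ S), ← card_compl,
      sum_congr rfl fun j hj => by rw [hg j (mem_compl.mp hj)]]
    simp
  _ ≤ ∑ j, g j ^ 2 :=
    sum_le_sum_of_subset_of_nonneg (subset_univ _) fun j _ _ => sq_nonneg (g j)

lemma approx_budget_le {m n Q : ℝ} (hm : 0 ≤ m) (hnm : n ≤ 3 * m) (hQ : 15000 ≤ Q) :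
    1 / (3600 * Q ^ 2) * (m + 100 * Q ^ 2 * n) ≤ (1 / 8 - 5 / Real.sqrt Q) * m := by
  have hQ0 : 0 < Q := by linarith
  have hsqrt : 122 ≤ Real.sqrt Q := by
    nlinarith [Real.sq_sqrt hQ0.le, Real.sqrt_nonneg Q]
  have hsplit : 1 / (3600 * Q ^ 2) * (m + 100 * Q ^ 2 * n) = 1 / (3600 * Q ^ 2) * m + n / 36 := by
    field_simp
    ring
  have hsmall : 1 / (3600 * Q ^ 2) ≤ 1 / (3600 * 15000 ^ 2) :=
    one_div_le_one_div_of_le (by norm_num) (by gcongr)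
  have hinv : 5 / Real.sqrt Q ≤ 5 / 122 := div_le_div_of_nonneg_left (by norm_num) (by norm_num) hsqrt
  rw [hsplit]
  nlinarith [mul_le_mul_of_nonneg_right hsmall hm, mul_le_mul_of_nonneg_right hinv hm]

open Classical in
theorem reduction_soundness_binary_general (n m : ℕ) (hnm : n ≤ 3 * m)
    (Q : ℝ) (hQ : 15000 ≤ Q)
    (idx : Fin m → Fin 3 → Fin n) (s : Fin m → Fin 3 → ℝ)
    (hs : ∀ j k, s j k = -1 ∨ s j k = 1)
    (x : Fin n → ℝ) (hx : ∀ i, x i = -1 ∨ x i = 1)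
    (g : Fin m → ℝ)
    (hg : ∀ j, g j = max (∑ k : Fin 3, s j k * x (idx j k) - 2) 0)
    (happrox : ∑ j : Fin m, (g j) ^ 2 ≤
      (1 / (3600 * Q ^ 2)) * ((m : ℝ) + 100 * Q ^ 2 * (n : ℝ))) :
    (7 / 8 + 5 / Real.sqrt Q) * (m : ℝ) ≤
      ((Finset.univ.filter (fun j : Fin m => ∃ k : Fin 3,
          (s j k = 1 ∧ x (idx j k) = -1) ∨
            (s j k = -1 ∧ x (idx j k) = 1))).card : ℝ) := by
  set S := Finset.univ.filter (fun j : Fin m => ∃ k : Fin 3,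
      (s j k = 1 ∧ x (idx j k) = -1) ∨ (s j k = -1 ∧ x (idx j k) = 1))
  have hunsat (j : Fin m) (hj : j ∉ S) : g j = 1 := by
    rw [hg j]
    exact clause_gadget_eq_one_of_unsat (hs j) (fun k => hx (idx j k)) (by simpa [S] using hj)
  have hcount := card_sub_card_le_sum_sq S g hunsat
  rw [Fintype.card_fin] at hcount
  have hbudget := approx_budget_le (Nat.cast_nonneg m) (by exact_mod_cast hnm : (n : ℝ) ≤ 3 * m) hQ
  linarith

open Classical in
/-- Soundness claim of the Theorem 2 reduction (binary case): an approximate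
preimage yields an assignment satisfying at least a `(7/8 + 5/√Q)` fraction of
the clauses.  (The assignment is `t i = true` iff `x i = -1`, so a literal with
sign `s` at variable `i` is true iff `s = 1 ∧ x i = -1` or `s = -1 ∧ x i = 1`.) -/
theorem reduction_soundness_binary (n m : ℕ) (hm : 1 ≤ m) (hnm : n ≤ 3 * m)
    (Q : ℝ) (hQ : 15000 ≤ Q)
    (idx : Fin m → Fin 3 → Fin n) (s : Fin m → Fin 3 → ℝ)
    (hs : ∀ j k, s j k = -1 ∨ s j k = 1)
    (x : Fin n → ℝ) (hx : ∀ i, x i = -1 ∨ x i = 1)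
    (g : Fin m → ℝ)
    (hg : ∀ j, g j = max (∑ k : Fin 3, s j k * x (idx j k) - 2) 0)
    (happrox : ∑ j : Fin m, (g j) ^ 2 ≤
      (1 / (3600 * Q ^ 2)) * ((m : ℝ) + 100 * Q ^ 2 * (n : ℝ))) :
    (7 / 8 + 5 / Real.sqrt Q) * (m : ℝ) ≤
      ((Finset.univ.filter (fun j : Fin m => ∃ k : Fin 3,
          (s j k = 1 ∧ x (idx j k) = -1) ∨
            (s j k = -1 ∧ x (idx j k) = 1))).card : ℝ) :=
  reduction_soundness_binary_general n m hnm Q hQ idx s hs x hx g hg happrox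
end
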